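/- For every integer r with 1 ≤ r ≤ m−2, the vectors c_{2,1},...,c_{2,m−2}, c_{1,r} are linearly independent over Z_b. -/
import Mathlib


/-- Generating matrix `C₁` of the folded Hammersley point set: rows are 0-indexed, row
`i` being row `l = i + 1` of the paper.  For `1 ≤ l ≤ m - 1` the row has entry `b - 1`
in column `1` and entry `1` in column `l + 1` (1-indexed); for `m ≤ l ≤ n` it has entry
`b - 1` in column `1`; all other entries are zero. -/
def fhC1 (b m n : ℕ) : Matrix (Fin n) (Fin m) (ZMod b) := fun i j =>
  if (j : ℕ) = 0 then ((b - 1 : ℕ) : ZMod b)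
  else if (i : ℕ) + 2 ≤ m ∧ (j : ℕ) = (i : ℕ) + 1 then 1 else 0

/-- Generating matrix `C₂` of the folded Hammersley point set: rows are 0-indexed, row
`i` being row `l = i + 1` of the paper.  For `1 ≤ l ≤ m - 1` the row has entry `1` in
column `m - l` and entry `b - 1` in column `m` (1-indexed); for `m ≤ l ≤ n` it has entry
`b - 1` in column `m`; all other entries are zero. -/
def fhC2 (b m n : ℕ) : Matrix (Fin n) (Fin m) (ZMod b) := fun i j =>
  if (j : ℕ) + 1 = m then ((b - 1 : ℕ) : ZMod b)
  else if (i : ℕ) + 2 ≤ m ∧ (j : ℕ) + 2 + (i : ℕ) = m then 1 else 0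


/-- **Statement.** For every integer `r` with `1 ≤ r ≤ m - 2`, the vectors
`c_{2,1}, ..., c_{2,m-2}, c_{1,r}` (where `c_{j,l}` is the `l`-th row, 1-indexed,
of the generating matrix `C_j` of the folded Hammersley point set) are linearly
independent over `ZMod b`. -/
theorem folded_hammersley_rows_indep_two_b (b m n : ℕ) (hb : 2 ≤ b) (hmn : 2 * m ≤ n)
    (r : ℕ) (hr1 : 1 ≤ r) (hr2 : r + 2 ≤ m) :
    LinearIndependent (ZMod b)
      (Sum.elim
        (fun i : Fin (m - 2) => fhC2 b m n ⟨(i : ℕ), by have := i.isLt; omega⟩)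
        (fun _ : Unit => fhC1 b m n ⟨r - 1, by omega⟩)) := by
  have hm3 : 3 ≤ m := by omega
  have hb1 : 1 ≤ b := by omega
  have hbm1 : ((b - 1 : ℕ) : ZMod b) = -1 := by
    have : ((b : ℕ) : ZMod b) = 0 := ZMod.natCast_self b
    rw [Nat.cast_sub hb1, this]; ring
  rw [Fintype.linearIndependent_iff]
  intro g hg
  have hcol : ∀ j : Fin m,
      (∑ i : Fin (m - 2), g (Sum.inl i) *
        fhC2 b m n ⟨(i : ℕ), by have := i.isLt; omega⟩ j) +
      g (Sum.inr ()) * fhC1 b m n ⟨r - 1, by omega⟩ j = 0 := by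
    intro j
    have h := congrFun hg j
    simpa [Finset.sum_apply, Fintype.sum_sum_type, smul_eq_mul] using h
  have hinr : g (Sum.inr ()) = 0 := by
    have h0 := hcol ⟨0, by omega⟩
    have hz : ∀ i : Fin (m - 2),
        fhC2 b m n ⟨(i : ℕ), by have := i.isLt; omega⟩ ⟨0, by omega⟩ = 0 := by
      intro i
      have hi := i.isLt
      simp only [fhC2, Fin.val_mk]
      rw [if_neg (by omega), if_neg (by omega)]
    have h1 : fhC1 b m n ⟨r - 1, by omega⟩ ⟨0, by omega⟩ = -1 := by
      simp only [fhC1, Fin.val_mk]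
      rw [if_pos trivial, hbm1]
    rw [Finset.sum_eq_zero (fun i _ => by rw [hz i, mul_zero]), h1, zero_add] at h0
    simpa using h0
  refine Sum.rec ?_ ?_
  · intro i0
    have hi0 := i0.isLt
    have h0 := hcol ⟨m - 2 - (i0 : ℕ), by omega⟩
    have hz : ∀ i : Fin (m - 2),
        fhC2 b m n ⟨(i : ℕ), by have := i.isLt; omega⟩ ⟨m - 2 - (i0 : ℕ), by omega⟩
          = if i = i0 then 1 else 0 := by
      intro i
      have hi := i.isLt
      simp only [fhC2, Fin.val_mk]
      rw [if_neg (by omega)]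
      by_cases h : i = i0
      · subst h; rw [if_pos ⟨by omega, by omega⟩, if_pos rfl]
      · have : (i : ℕ) ≠ (i0 : ℕ) := fun hc => h (Fin.ext hc)
        rw [if_neg (by omega), if_neg h]
    have hsum : (∑ i : Fin (m - 2), g (Sum.inl i) *
        fhC2 b m n ⟨(i : ℕ), by have := i.isLt; omega⟩ ⟨m - 2 - (i0 : ℕ), by omega⟩)
        = g (Sum.inl i0) := by
      rw [Finset.sum_congr rfl (fun i _ => by rw [hz i, mul_ite, mul_one, mul_zero])]
      simp
    rw [hsum, hinr, zero_mul, add_zero] at h0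
    exact h0
  · intro u; cases u; exact hinr
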